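/- arXiv:2406.05619 — 2 statements merged into one kernel-verified Lean document; each statement's English description precedes it below -/
import Mathlib

section
/- Let d ≥ 1, let μ be the normalized Haar probability measure on the unitary group U(d), let e₀ be a fixed standard basis vector of ℂ^d, and let S be the swap operator on ℂ^d⊗ℂ^d. Then the Haar average of two copies of a Haar-random pure state equals the normalized symmetric projector: entrywise, ∫_{U(d)} (W|e₀⟩⟨e₀|W†) ⊗ (W|e₀⟩⟨e₀|W†) dμ(W) = (I + S)/(d(d+1)). -/
/-!
Write `M(a,b,c,e) = ∫ W_{a j} W̄_{b j} W_{c j} W̄_{e j} dμ(W)` for the fourth moments of a column of a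
Haar unitary. Left invariance makes the tensor `M` invariant under every `U ⊗ Ū ⊗ U ⊗ Ū`.
Diagonal phases force `M(a,b,c,e) = 0` unless `{a,c} = {b,e}` as multisets, permutation matrices
make the surviving values depend only on the coincidence pattern, and the unitary
`ω • 1 + ω̄ • P_{(a b)}` with `ω = (1 + i)/2` gives `M(a,a,a,a) = 2 M(a,a,b,b)`. So
`M(a,b,c,e) = κ (δ_{ab} δ_{ce} + δ_{ae} δ_{cb})`, and the normalisation `∑_{s,t} M(s,s,t,t) = 1` of the
column gives `κ = 1 / (d (d + 1))`.
-/

open MeasureTheory Matrix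
open scoped Kronecker

/-- The swap operator `S` on `ℂ^d ⊗ ℂ^d`, `S[(i,j),(k,l)] = δ_{il} δ_{jk}`. -/
def swapOp (d : ℕ) : Matrix (Fin d × Fin d) (Fin d × Fin d) ℂ :=
  fun p q => if p.1 = q.2 ∧ p.2 = q.1 then 1 else 0

namespace Matrix

variable {n α : Type*} [Fintype n] [DecidableEq n] [CommRing α] [StarRing α]

theorem diagonal_mem_unitaryGroup {φ : n → α} (hφ : ∀ k, φ k ∈ unitary α) :
    diagonal φ ∈ unitaryGroup n α := by
  rw [mem_unitaryGroup_iff', star_eq_conjTranspose, diagonal_conjTranspose,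
    diagonal_mul_diagonal, ← diagonal_one]
  exact congrArg diagonal (funext fun k => Unitary.star_mul_self_of_mem (hφ k))

theorem permMatrix_mem_unitaryGroup (σ : Equiv.Perm n) :
    σ.permMatrix α ∈ unitaryGroup n α := by
  rw [mem_unitaryGroup_iff', star_eq_conjTranspose, conjTranspose_permMatrix,
    ← permMatrix_mul, mul_inv_cancel, permMatrix_one]

theorem sum_star_mul_self_col (W : unitaryGroup n α) (j : n) :
    ∑ k, star (W.1 k j) * W.1 k j = 1 := by
  simpa [mul_apply] using congrFun (congrFun (UnitaryGroup.star_mul_self W) j) j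

end Matrix

theorem smul_one_add_smul_mem_unitary {A : Type*} [Ring A] [StarRing A] [Algebra ℂ A]
    [StarModule ℂ A] {P : A} (hP : P ∈ unitary A) (hP' : IsSelfAdjoint P) {a b : ℂ}
    (hnorm : star a * a + star b * b = 1) (horth : star a * b + star b * a = 0) :
    a • (1 : A) + b • P ∈ unitary A := by
  have hPP : P * P = 1 := by simpa [hP'.star_eq] using Unitary.star_mul_self_of_mem hP
  have hstar : star (a • (1 : A) + b • P) = star a • 1 + star b • P := by
    simp only [star_add, star_smul, star_one, hP'.star_eq]
  rw [Unitary.mem_iff, hstar]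
  constructor <;>
  · simp only [add_mul, mul_add, smul_mul_smul, one_mul, mul_one, hPP]
    linear_combination (norm := module) hnorm • (1 : A) + horth • P

theorem exists_mulSingle_I_ne_one {n : Type*} [DecidableEq n] {a b c e : n}
    (h₁ : ¬(a = b ∧ c = e)) (h₂ : ¬(a = e ∧ c = b)) :
    ∃ t, let φ : n → ℂ := Pi.mulSingle t Complex.I
      φ a * star (φ b) * (φ c * star (φ e)) ≠ 1 := by
  by_cases hb : b = a <;> by_cases he : e = a
  · have hc : c ≠ a := fun hc => h₁ ⟨hb.symm, hc.trans he.symm⟩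
    exact ⟨a, by simp [hb, he, hc, Complex.ext_iff]⟩
  · have hce : e ≠ c := fun h => h₁ ⟨hb.symm, h.symm⟩
    by_cases hc : c = a
    · exact ⟨a, by simp [hb, he, hc, Complex.ext_iff]⟩
    · exact ⟨c, by simp [hb, Ne.symm hc, hce, Complex.ext_iff]⟩
  · have hcb : b ≠ c := fun h => h₂ ⟨he.symm, h.symm⟩
    by_cases hc : c = a
    · exact ⟨a, by simp [hb, he, hc, Complex.ext_iff]⟩
    · exact ⟨c, by simp [he, Ne.symm hc, hcb, Complex.ext_iff]⟩
  · by_cases hc : c = a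
    · exact ⟨a, by simp [hb, he, hc, Complex.ext_iff]; norm_num⟩
    · exact ⟨a, by simp [hb, he, hc, Complex.ext_iff]⟩

section FourthMoment

variable {n : Type*} [Fintype n] [DecidableEq n]
  [MeasurableSpace (unitaryGroup n ℂ)] (μ : Measure (unitaryGroup n ℂ))

noncomputable def fourthMoment (j a b c e : n) : ℂ :=
  ∫ W : unitaryGroup n ℂ, W.1 a j * star (W.1 b j) * (W.1 c j * star (W.1 e j)) ∂μ

variable {μ}

theorem fourthMoment_comm (j a b c e : n) :
    fourthMoment μ j a b c e = fourthMoment μ j a e c b := by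
  simp only [fourthMoment]
  congr 1 with W
  ring

variable [BorelSpace (unitaryGroup n ℂ)]

theorem integrable_fourthMoment_integrand [IsFiniteMeasure μ] (j a b c e : n) :
    Integrable (fun W : unitaryGroup n ℂ =>
      W.1 a j * star (W.1 b j) * (W.1 c j * star (W.1 e j))) μ := by
  have hcont : ∀ x, Continuous fun W : unitaryGroup n ℂ => W.1 x j := fun x =>
    continuous_subtype_val.matrix_elem x j
  refine Integrable.of_bound (C := 1)
    ((((hcont a).mul (hcont b).star).mul ((hcont c).mul (hcont e).star)).aestronglyMeasurable)
    (Filter.Eventually.of_forall fun W => ?_)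
  have hW : ∀ x, ‖W.1 x j‖ ≤ 1 := fun x => entry_norm_bound_of_unitary W.2 x j
  simp only [norm_mul, norm_star]
  exact mul_le_one₀ (mul_le_one₀ (hW a) (norm_nonneg _) (hW b)) (by positivity)
    (mul_le_one₀ (hW c) (norm_nonneg _) (hW e))

theorem sum_fourthMoment_diag [IsProbabilityMeasure μ] (j : n) :
    ∑ s, ∑ t, fourthMoment μ j s s t t = 1 := by
  have hint : ∀ s t, Integrable (fun W : unitaryGroup n ℂ =>
      W.1 s j * star (W.1 s j) * (W.1 t j * star (W.1 t j))) μ := fun s t =>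
    integrable_fourthMoment_integrand j s s t t
  have hcol : ∀ W : unitaryGroup n ℂ,
      ∑ s, ∑ t, W.1 s j * star (W.1 s j) * (W.1 t j * star (W.1 t j)) = 1 := fun W => by
    simp only [← Finset.sum_mul_sum, mul_comm (W.1 _ j), sum_star_mul_self_col, one_mul]
  simp (disch := intro _ _; fun_prop) only [fourthMoment, ← integral_finsetSum]
  rw [integral_congr_ae (Filter.Eventually.of_forall hcol)]
  simp

variable [μ.IsMulLeftInvariant] [IsFiniteMeasure μ]

theorem fourthMoment_eq_sum (U : unitaryGroup n ℂ) (j a b c e : n) :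
    fourthMoment μ j a b c e = ∑ a', ∑ b', ∑ c', ∑ e',
      U.1 a a' * star (U.1 b b') * (U.1 c c' * star (U.1 e e')) * fourthMoment μ j a' b' c' e' := by
  have hexpand : ∀ W : unitaryGroup n ℂ,
      (U * W).1 a j * star ((U * W).1 b j) * ((U * W).1 c j * star ((U * W).1 e j)) =
        ∑ a', ∑ b', ∑ c', ∑ e', U.1 a a' * star (U.1 b b') * (U.1 c c' * star (U.1 e e')) *
          (W.1 a' j * star (W.1 b' j) * (W.1 c' j * star (W.1 e' j))) := by
    intro W
    simp only [Submonoid.coe_mul, mul_apply, star_sum, Finset.sum_mul_sum]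
    refine Finset.sum_congr rfl fun _ _ => Finset.sum_comm.trans <| Finset.sum_congr rfl fun _ _ =>
      Finset.sum_congr rfl fun _ _ => Finset.sum_congr rfl fun _ _ => by
        simp only [star_mul']; ring
  have hint : ∀ a' b' c' e', Integrable (fun W : unitaryGroup n ℂ =>
      U.1 a a' * star (U.1 b b') * (U.1 c c' * star (U.1 e e')) *
        (W.1 a' j * star (W.1 b' j) * (W.1 c' j * star (W.1 e' j)))) μ := fun a' b' c' e' =>
    (integrable_fourthMoment_integrand j a' b' c' e').const_mul _
  simp only [fourthMoment, ← integral_const_mul]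
  rw [← integral_mul_left_eq_self _ U, integral_congr_ae (Filter.Eventually.of_forall hexpand)]
  simp (disch := intro _ _; fun_prop) only [integral_finsetSum]

theorem fourthMoment_eq_phase_mul {φ : n → ℂ} (hφ : ∀ k, φ k ∈ unitary ℂ) (j a b c e : n) :
    fourthMoment μ j a b c e =
      φ a * star (φ b) * (φ c * star (φ e)) * fourthMoment μ j a b c e := by
  conv_lhs => rw [fourthMoment_eq_sum ⟨diagonal φ, diagonal_mem_unitaryGroup hφ⟩]
  simp [diagonal_apply, apply_ite star]

theorem fourthMoment_perm (σ : Equiv.Perm n) (j a b c e : n) :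
    fourthMoment μ j (σ a) (σ b) (σ c) (σ e) = fourthMoment μ j a b c e := by
  conv_rhs => rw [fourthMoment_eq_sum ⟨σ.permMatrix ℂ, permMatrix_mem_unitaryGroup σ⟩]
  simp [PEquiv.toMatrix_apply, apply_ite star]

theorem fourthMoment_eq_zero {a b c e : n} (h₁ : ¬(a = b ∧ c = e)) (h₂ : ¬(a = e ∧ c = b))
    (j : n) : fourthMoment μ j a b c e = 0 := by
  obtain ⟨t, ht⟩ := exists_mulSingle_I_ne_one h₁ h₂
  have hφ : ∀ k, (Pi.mulSingle t Complex.I : n → ℂ) k ∈ unitary ℂ := fun k => by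
    rw [Pi.mulSingle_apply]
    split_ifs <;> simp [Unitary.mem_iff]
  have h := fourthMoment_eq_phase_mul (μ := μ) hφ j a b c e
  refine (mul_eq_zero.mp ?_).resolve_left (sub_ne_zero.mpr (Ne.symm ht))
  linear_combination h

theorem fourthMoment_diag_eq_two_mul {a b : n} (hab : a ≠ b) (j : n) :
    fourthMoment μ j a a a a = 2 * fourthMoment μ j a a b b := by
  set ω : ℂ := (1 + Complex.I) / 2 with hω
  have hωω : star ω * ω = 1 / 2 := by norm_num [hω, Complex.ext_iff]
  have hnorm : star ω * ω + star (star ω) * star ω = 1 := by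
    rw [star_star, mul_comm ω, hωω]; norm_num
  have horth : star ω * star ω + star (star ω) * ω = 0 := by norm_num [hω, Complex.ext_iff]
  have hP : IsSelfAdjoint ((Equiv.swap a b).permMatrix ℂ) := by
    simp [IsSelfAdjoint, star_eq_conjTranspose]
  have hU : ω • (1 : Matrix n n ℂ) + star ω • (Equiv.swap a b).permMatrix ℂ ∈ unitaryGroup n ℂ :=
    smul_one_add_smul_mem_unitary (A := Matrix n n ℂ)
      (permMatrix_mem_unitaryGroup (Equiv.swap a b)) hP hnorm horth
  have hrow : ∀ y, (ω • 1 + star ω • (Equiv.swap a b).permMatrix ℂ : Matrix n n ℂ) a y =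
      ω * (if a = y then 1 else 0) + star ω * (if b = y then 1 else 0) := fun y => by
    simp [PEquiv.toMatrix_apply, one_apply]
  have h := fourthMoment_eq_sum (μ := μ) ⟨_, hU⟩ j a a a a
  simp only [hrow, star_add, star_star, apply_ite star, star_zero, mul_add, add_mul,
    Finset.sum_add_distrib, mul_ite, ite_mul, mul_one, mul_zero, zero_mul, Finset.sum_ite_eq,
    Finset.mem_univ, if_true] at h
  simp (disch := simp [hab, hab.symm]) only [fourthMoment_eq_zero, mul_zero, add_zero,
    zero_add] at h
  have hbbbb : fourthMoment μ j b b b b = fourthMoment μ j a a a a := by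
    simpa using fourthMoment_perm (μ := μ) (Equiv.swap a b) j a a a a
  have hbbaa : fourthMoment μ j b b a a = fourthMoment μ j a a b b := by
    simpa using fourthMoment_perm (μ := μ) (Equiv.swap a b) j a a b b
  rw [hbbbb, hbbaa, fourthMoment_comm j a b b a, fourthMoment_comm j b a a b, hbbaa] at h
  -- each of the six surviving coefficients is `(ω̄ ω)² = 1/4`
  linear_combination 2 * h + 2 * (star ω * ω + 1 / 2) *
    (2 * fourthMoment μ j a a a a + 4 * fourthMoment μ j a a b b) * hωω

theorem fourthMoment_diag_diag (j s t : n) :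
    fourthMoment μ j s s t t = (1 + if s = t then 1 else 0) * (fourthMoment μ j j j j j / 2) := by
  have hdiag : fourthMoment μ j s s s s = fourthMoment μ j j j j j := by
    simpa using fourthMoment_perm (μ := μ) (Equiv.swap j s) j j j j j
  by_cases hst : s = t
  · subst hst
    rw [hdiag, if_pos rfl]
    ring
  · rw [if_neg hst, ← hdiag, fourthMoment_diag_eq_two_mul hst]
    ring

end FourthMoment

theorem fourthMoment_eq {n : Type*} [Fintype n] [DecidableEq n]
    [MeasurableSpace (unitaryGroup n ℂ)] [BorelSpace (unitaryGroup n ℂ)]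
    {μ : Measure (unitaryGroup n ℂ)} [μ.IsMulLeftInvariant] [IsProbabilityMeasure μ]
    (j a b c e : n) :
    fourthMoment μ j a b c e =
      ((if a = b ∧ c = e then 1 else 0) + (if a = e ∧ c = b then 1 else 0)) /
        ((Fintype.card n : ℂ) * (Fintype.card n + 1)) := by
  have hdiag := fourthMoment_diag_diag (μ := μ) j
  generalize fourthMoment μ j j j j j / 2 = κ at hdiag
  have hκ : (Fintype.card n : ℂ) * (Fintype.card n + 1) * κ = 1 := by
    have hsum := sum_fourthMoment_diag (μ := μ) j
    simp only [hdiag, add_mul, one_mul, Finset.sum_add_distrib, ite_mul, zero_mul,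
      Finset.sum_ite_eq, Finset.mem_univ, if_true, Finset.sum_const, Finset.card_univ,
      nsmul_eq_mul] at hsum
    linear_combination hsum
  rw [eq_div_iff (left_ne_zero_of_mul_eq_one hκ)]
  by_cases h₁ : a = b ∧ c = e
  · obtain ⟨rfl, rfl⟩ := h₁
    by_cases hac : a = c
    · subst hac
      simp only [hdiag, and_self, if_true]
      linear_combination 2 * hκ
    · simp only [hdiag, hac, and_self, if_true, if_false, false_and]
      linear_combination hκ
  · by_cases h₂ : a = e ∧ c = b
    · obtain ⟨rfl, rfl⟩ := h₂
      have hac : a ≠ c := fun h => h₁ ⟨h, h.symm⟩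
      simp only [fourthMoment_comm j a c c a, hdiag, hac, and_self, false_and, if_true, if_false]
      linear_combination hκ
    · rw [fourthMoment_eq_zero h₁ h₂, if_neg h₁, if_neg h₂]
      ring

theorem haar_average_two_copies_general (d : ℕ)
    [MeasurableSpace (Matrix.unitaryGroup (Fin d) ℂ)]
    [BorelSpace (Matrix.unitaryGroup (Fin d) ℂ)]
    (μ : Measure (Matrix.unitaryGroup (Fin d) ℂ))
    [μ.IsHaarMeasure] [IsProbabilityMeasure μ]
    (i₀ : Fin d) (p q : Fin d × Fin d) :
    (∫ W : Matrix.unitaryGroup (Fin d) ℂ,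
        ((vecMulVec (W.1.mulVec (Pi.single i₀ 1)) (star (W.1.mulVec (Pi.single i₀ 1)))
          ⊗ₖ vecMulVec (W.1.mulVec (Pi.single i₀ 1)) (star (W.1.mulVec (Pi.single i₀ 1)))) p q) ∂μ)
      = ((1 : Matrix (Fin d × Fin d) (Fin d × Fin d) ℂ) + swapOp d) p q
          / ((d : ℂ) * ((d : ℂ) + 1)) := by
  have h := fourthMoment_eq (μ := μ) i₀ p.1 q.1 p.2 q.2
  simp only [fourthMoment, Fintype.card_fin] at h
  simp only [kroneckerMap_apply, vecMulVec_apply, mulVec_single_one, col_apply, Pi.star_apply,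
    Matrix.add_apply, one_apply, swapOp, Prod.ext_iff]
  exact h

/-- **Second-moment of a Haar-random pure state.** Entrywise,
`∫ (W|e₀⟩⟨e₀|W†) ⊗ (W|e₀⟩⟨e₀|W†) dμ(W) = (I + S)/(d(d+1))`,
where `μ` is the normalized Haar probability measure on `U(d)`. -/
theorem haar_average_two_copies (d : ℕ) (hd : 1 ≤ d)
    [MeasurableSpace (Matrix.unitaryGroup (Fin d) ℂ)]
    [BorelSpace (Matrix.unitaryGroup (Fin d) ℂ)]
    (μ : Measure (Matrix.unitaryGroup (Fin d) ℂ))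
    [μ.IsHaarMeasure] [IsProbabilityMeasure μ]
    (i₀ : Fin d) (p q : Fin d × Fin d) :
    (∫ W : Matrix.unitaryGroup (Fin d) ℂ,
        ((vecMulVec (W.1.mulVec (Pi.single i₀ 1)) (star (W.1.mulVec (Pi.single i₀ 1)))
          ⊗ₖ vecMulVec (W.1.mulVec (Pi.single i₀ 1)) (star (W.1.mulVec (Pi.single i₀ 1)))) p q) ∂μ)
      = ((1 : Matrix (Fin d × Fin d) (Fin d × Fin d) ℂ) + swapOp d) p q
          / ((d : ℂ) * ((d : ℂ) + 1)) :=
  haar_average_two_copies_general d μ i₀ p q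
end

section
/- Let H be a D×D complex Hermitian matrix with H² = I, let P and Q be D×D complex matrices, and set W(θ) := P · exp(−i(θ/2)H) · Q. For D²×D² complex matrices ρ and O define the two-copy expectation G(α,β) := Tr[ (W(α)⊗W(β)) ρ (W(α)⊗W(β))† O ]. Then the map θ ↦ G(θ,θ) is differentiable and its derivative obeys the two-copy parameter-shift rule: (d/dθ) G(θ,θ) = (1/2)·G(θ+π/2, θ) − (1/2)·G(θ−π/2, θ) + (1/2)·G(θ, θ+π/2) − (1/2)·G(θ, θ−π/2). -/
open Matrix
open scoped Kronecker

/-- Pauli rotation `exp(-i(θ/2)H)` generated by a Hermitian involution `H`. -/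
noncomputable def pauliRot {D : ℕ} (H : Matrix (Fin D) (Fin D) ℂ) (θ : ℝ) :
    Matrix (Fin D) (Fin D) ℂ :=
  NormedSpace.exp ((-(Complex.I * (θ / 2 : ℂ))) • H)

/-- The circuit `W(θ) = P · exp(-i(θ/2)H) · Q` with the parameter entering through a
single Pauli rotation. -/
noncomputable def circuitW {D : ℕ} (P Q H : Matrix (Fin D) (Fin D) ℂ) (θ : ℝ) :
    Matrix (Fin D) (Fin D) ℂ :=
  P * pauliRot H θ * Q

/-- Two-copy expectation value `G(α,β) = Tr[(W(α)⊗W(β)) ρ (W(α)⊗W(β))† O]`. -/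
noncomputable def twoCopyExpect {D : ℕ} (P Q H : Matrix (Fin D) (Fin D) ℂ)
    (ρ O : Matrix (Fin D × Fin D) (Fin D × Fin D) ℂ) (α β : ℝ) : ℂ :=
  ((circuitW P Q H α ⊗ₖ circuitW P Q H β) * ρ * (circuitW P Q H α ⊗ₖ circuitW P Q H β)ᴴ
    * O).trace

/-! ### Auxiliary material -/

lemma exp_smul_involution {D : ℕ} (H : Matrix (Fin D) (Fin D) ℂ) (hH2 : H ^ 2 = 1) (z : ℂ) :
    NormedSpace.exp ((-(Complex.I * z)) • H)
      = Complex.cos z • (1 : Matrix (Fin D) (Fin D) ℂ) + (-(Complex.I * Complex.sin z)) • H := by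
  have h2 : (-(Complex.I * z)) ^ 2 = -(z ^ 2) := by
    rw [neg_sq, mul_pow, Complex.I_sq]; ring
  rw [NormedSpace.exp_eq_tsum ℂ, show -(Complex.I * Complex.sin z) = -Complex.I * Complex.sin z
    from (neg_mul _ _).symm]
  refine HasSum.tsum_eq (HasSum.even_add_odd ?_ ?_)
  · have hc := (Complex.hasSum_cos z).smul_const (1 : Matrix (Fin D) (Fin D) ℂ)
    convert hc using 2 with k
    case e'_3 => rfl
    rw [smul_pow, pow_mul, pow_mul, hH2, one_pow, smul_smul]
    congr 1
    rw [h2, neg_pow, ← pow_mul]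
    field_simp
  · have hs := ((Complex.hasSum_sin z).mul_left (-Complex.I)).smul_const H
    convert hs using 2 with k
    case e'_3 => rfl
    rw [smul_pow, show H ^ (2 * k + 1) = (H ^ 2) ^ k * H by rw [pow_succ, pow_mul],
      hH2, one_pow, one_mul, smul_smul]
    rw [show (-(Complex.I * z)) ^ (2 * k + 1) = ((-(Complex.I * z)) ^ 2) ^ k * (-(Complex.I * z))
      by rw [← pow_mul, ← pow_succ]]
    rw [h2, neg_pow, ← pow_mul]
    congr 1
    have hf : (((2 * k + 1).factorial : ℂ)) ≠ 0 := Nat.cast_ne_zero.mpr (Nat.factorial_ne_zero _)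
    field_simp
    ring

noncomputable def tr4 {D : ℕ} (ρ O : Matrix (Fin D × Fin D) (Fin D × Fin D) ℂ)
    (X Y Z V : Matrix (Fin D) (Fin D) ℂ) : ℂ :=
  ((X ⊗ₖ Y) * ρ * (Zᴴ ⊗ₖ Vᴴ) * O).trace

lemma kronecker_conjT {D : ℕ} (A B : Matrix (Fin D) (Fin D) ℂ) :
    (A ⊗ₖ B)ᴴ = Aᴴ ⊗ₖ Bᴴ := by
  ext ⟨i, j⟩ ⟨k, l⟩
  simp [conjTranspose_apply, kroneckerMap_apply, mul_comm]

lemma key_expand {D : ℕ} (A B : Matrix (Fin D) (Fin D) ℂ)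
    (ρ O : Matrix (Fin D × Fin D) (Fin D × Fin D) ℂ) (c1 u1 c2 u2 : ℂ)
    (hc1 : star c1 = c1) (hu1 : star u1 = -u1) (hc2 : star c2 = c2) (hu2 : star u2 = -u2) :
    (((c1 • A + u1 • B) ⊗ₖ (c2 • A + u2 • B)) * ρ *
      ((c1 • A + u1 • B) ⊗ₖ (c2 • A + u2 • B))ᴴ * O).trace =
        (c1*c1) * (c2*c2) * tr4 ρ O A A A A
        + (c1*c1) * (-(u2*c2)) * tr4 ρ O A A A B
        + (c1*c1) * (u2*c2) * tr4 ρ O A B A A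
        + (c1*c1) * (-(u2*u2)) * tr4 ρ O A B A B
        + (-(u1*c1)) * (c2*c2) * tr4 ρ O A A B A
        + (-(u1*c1)) * (-(u2*c2)) * tr4 ρ O A A B B
        + (-(u1*c1)) * (u2*c2) * tr4 ρ O A B B A
        + (-(u1*c1)) * (-(u2*u2)) * tr4 ρ O A B B B
        + (u1*c1) * (c2*c2) * tr4 ρ O B A A A
        + (u1*c1) * (-(u2*c2)) * tr4 ρ O B A A B
        + (u1*c1) * (u2*c2) * tr4 ρ O B B A A
        + (u1*c1) * (-(u2*u2)) * tr4 ρ O B B A B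
        + (-(u1*u1)) * (c2*c2) * tr4 ρ O B A B A
        + (-(u1*u1)) * (-(u2*c2)) * tr4 ρ O B A B B
        + (-(u1*u1)) * (u2*c2) * tr4 ρ O B B B A
        + (-(u1*u1)) * (-(u2*u2)) * tr4 ρ O B B B B
    := by
  simp only [Matrix.add_kronecker, Matrix.kronecker_add, Matrix.smul_kronecker,
    Matrix.kronecker_smul, conjTranspose_add, conjTranspose_smul, kronecker_conjT,
    Matrix.add_mul, Matrix.mul_add, smul_mul_assoc, mul_smul_comm, Matrix.trace_add,
    Matrix.trace_smul, smul_eq_mul, hc1, hu1, hc2, hu2, smul_smul, tr4]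
  ring

/-- basis functions : `cos²(t/2)`, `sin²(t/2)`, `-i sin(t/2) cos(t/2)` -/
noncomputable def fb0 (t : ℝ) : ℂ := ((Real.cos (t/2) : ℝ) : ℂ) * ((Real.cos (t/2) : ℝ) : ℂ)
noncomputable def fb1 (t : ℝ) : ℂ := ((Real.sin (t/2) : ℝ) : ℂ) * ((Real.sin (t/2) : ℝ) : ℂ)
noncomputable def fb2 (t : ℝ) : ℂ :=
  -Complex.I * (((Real.sin (t/2) : ℝ) : ℂ) * ((Real.cos (t/2) : ℝ) : ℂ))

/-- their derivatives -/
noncomputable def fd0 (t : ℝ) : ℂ := -(((Real.sin (t/2) : ℝ) : ℂ) * ((Real.cos (t/2) : ℝ) : ℂ))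
noncomputable def fd1 (t : ℝ) : ℂ := ((Real.sin (t/2) : ℝ) : ℂ) * ((Real.cos (t/2) : ℝ) : ℂ)
noncomputable def fd2 (t : ℝ) : ℂ :=
  -Complex.I * ((((Real.cos (t/2) : ℝ) : ℂ) * ((Real.cos (t/2) : ℝ) : ℂ)
    - ((Real.sin (t/2) : ℝ) : ℂ) * ((Real.sin (t/2) : ℝ) : ℂ)) / 2)

lemma hasDerivAt_half (t : ℝ) : HasDerivAt (fun x : ℝ => x / 2) (1 / 2 : ℝ) t := by
  simpa using (hasDerivAt_id t).div_const 2

lemma hasDerivAt_cos_half (t : ℝ) :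
    HasDerivAt (fun x : ℝ => Real.cos (x / 2)) (-Real.sin (t/2) * (1/2)) t := by
  simpa [Function.comp_def] using (Real.hasDerivAt_cos (t/2)).comp t (hasDerivAt_half t)

lemma hasDerivAt_sin_half (t : ℝ) :
    HasDerivAt (fun x : ℝ => Real.sin (x / 2)) (Real.cos (t/2) * (1/2)) t := by
  simpa [Function.comp_def] using (Real.hasDerivAt_sin (t/2)).comp t (hasDerivAt_half t)

lemma hfb0 (t : ℝ) : HasDerivAt fb0 (fd0 t) t := by
  have hr : HasDerivAt (fun x : ℝ => Real.cos (x/2) * Real.cos (x/2))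
      (-(Real.sin (t/2) * Real.cos (t/2))) t := by
    exact ((hasDerivAt_cos_half t).mul (hasDerivAt_cos_half t)).congr_deriv (by ring)
  have h := hr.ofReal_comp
  simp only [Complex.ofReal_mul, Complex.ofReal_neg] at h
  exact h

lemma hfb1 (t : ℝ) : HasDerivAt fb1 (fd1 t) t := by
  have hr : HasDerivAt (fun x : ℝ => Real.sin (x/2) * Real.sin (x/2))
      (Real.sin (t/2) * Real.cos (t/2)) t := by
    exact ((hasDerivAt_sin_half t).mul (hasDerivAt_sin_half t)).congr_deriv (by ring)
  have h := hr.ofReal_comp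
  simp only [Complex.ofReal_mul] at h
  exact h

lemma hfb2 (t : ℝ) : HasDerivAt fb2 (fd2 t) t := by
  have hr : HasDerivAt (fun x : ℝ => Real.sin (x/2) * Real.cos (x/2))
      ((Real.cos (t/2) * Real.cos (t/2) - Real.sin (t/2) * Real.sin (t/2)) / 2) t := by
    exact ((hasDerivAt_sin_half t).mul (hasDerivAt_cos_half t)).congr_deriv (by ring)
  have h := hr.ofReal_comp.const_mul (-Complex.I)
  simp only [Complex.ofReal_mul, Complex.ofReal_div, Complex.ofReal_sub,
    Complex.ofReal_ofNat] at h
  exact h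

lemma cos_pi_div_four_mul_sin : Real.cos (Real.pi/4) * Real.sin (Real.pi/4) = 1/2 := by
  rw [Real.cos_pi_div_four, Real.sin_pi_div_four, div_mul_div_comm,
    Real.mul_self_sqrt (by norm_num : (0:ℝ) ≤ 2)]
  norm_num

lemma shift0 (t : ℝ) : fb0 (t + Real.pi/2) - fb0 (t - Real.pi/2) = 2 * fd0 t := by
  have h : Real.cos (t/2 + Real.pi/4) * Real.cos (t/2 + Real.pi/4)
      - Real.cos (t/2 - Real.pi/4) * Real.cos (t/2 - Real.pi/4)
      = 2 * (-(Real.sin (t/2) * Real.cos (t/2))) := by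
    rw [Real.cos_add, Real.cos_sub]
    linear_combination (-4 * Real.sin (t/2) * Real.cos (t/2)) * cos_pi_div_four_mul_sin
  simp only [fb0, fd0, show (t + Real.pi/2)/2 = t/2 + Real.pi/4 by ring,
    show (t - Real.pi/2)/2 = t/2 - Real.pi/4 by ring]
  push_cast
  have h' := congrArg (fun x : ℝ => (x : ℂ)) h
  push_cast at h'
  linear_combination h'

lemma shift1 (t : ℝ) : fb1 (t + Real.pi/2) - fb1 (t - Real.pi/2) = 2 * fd1 t := by
  have h : Real.sin (t/2 + Real.pi/4) * Real.sin (t/2 + Real.pi/4)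
      - Real.sin (t/2 - Real.pi/4) * Real.sin (t/2 - Real.pi/4)
      = 2 * (Real.sin (t/2) * Real.cos (t/2)) := by
    rw [Real.sin_add, Real.sin_sub]
    linear_combination (4 * Real.sin (t/2) * Real.cos (t/2)) * cos_pi_div_four_mul_sin
  simp only [fb1, fd1, show (t + Real.pi/2)/2 = t/2 + Real.pi/4 by ring,
    show (t - Real.pi/2)/2 = t/2 - Real.pi/4 by ring]
  push_cast
  have h' := congrArg (fun x : ℝ => (x : ℂ)) h
  push_cast at h'
  linear_combination h'

lemma shift2 (t : ℝ) : fb2 (t + Real.pi/2) - fb2 (t - Real.pi/2) = 2 * fd2 t := by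
  have h : Real.sin (t/2 + Real.pi/4) * Real.cos (t/2 + Real.pi/4)
      - Real.sin (t/2 - Real.pi/4) * Real.cos (t/2 - Real.pi/4)
      = Real.cos (t/2) * Real.cos (t/2) - Real.sin (t/2) * Real.sin (t/2) := by
    rw [Real.sin_add, Real.sin_sub, Real.cos_add, Real.cos_sub]
    linear_combination (2 * (Real.cos (t/2) * Real.cos (t/2)
      - Real.sin (t/2) * Real.sin (t/2))) * cos_pi_div_four_mul_sin
  simp only [fb2, fd2, show (t + Real.pi/2)/2 = t/2 + Real.pi/4 by ring,
    show (t - Real.pi/2)/2 = t/2 - Real.pi/4 by ring]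
  have h' := congrArg (fun x : ℝ => (x : ℂ)) h
  push_cast at h' ⊢
  linear_combination -Complex.I * h'

lemma star_ofReal' (x : ℝ) : star ((x : ℝ) : ℂ) = ((x : ℝ) : ℂ) := Complex.conj_ofReal x

lemma star_negIsin (x : ℝ) :
    star (-(Complex.I * ((x : ℝ) : ℂ))) = -(-(Complex.I * ((x : ℝ) : ℂ))) := by
  simp [Complex.ext_iff]

lemma sq_negIsin (x : ℝ) :
    (-(Complex.I * ((x : ℝ) : ℂ))) * (-(Complex.I * ((x : ℝ) : ℂ)))
      = -(((x : ℝ) : ℂ) * ((x : ℝ) : ℂ)) := by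
  linear_combination ((x : ℝ) : ℂ) * ((x : ℝ) : ℂ) * Complex.I_sq

/-- **Two-copy parameter-shift rule.** -/
theorem two_copy_parameter_shift (D : ℕ) (P Q H : Matrix (Fin D) (Fin D) ℂ)
    (hH : H.IsHermitian) (hH2 : H ^ 2 = 1)
    (ρ O : Matrix (Fin D × Fin D) (Fin D × Fin D) ℂ) (θ : ℝ) :
    HasDerivAt (fun t : ℝ => twoCopyExpect P Q H ρ O t t)
      ((1 / 2 : ℂ) * twoCopyExpect P Q H ρ O (θ + Real.pi / 2) θ
        - (1 / 2 : ℂ) * twoCopyExpect P Q H ρ O (θ - Real.pi / 2) θ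
        + (1 / 2 : ℂ) * twoCopyExpect P Q H ρ O θ (θ + Real.pi / 2)
        - (1 / 2 : ℂ) * twoCopyExpect P Q H ρ O θ (θ - Real.pi / 2)) θ := by
  set A := P * Q with hA
  set B := P * H * Q with hB
  have hW : ∀ t : ℝ, circuitW P Q H t
      = ((Real.cos (t/2) : ℝ) : ℂ) • A + (-(Complex.I * ((Real.sin (t/2) : ℝ) : ℂ))) • B := by
    intro t
    rw [circuitW, pauliRot, show (Complex.I * ((t : ℂ) / 2)) = Complex.I * (((t/2 : ℝ) : ℂ))
      by push_cast; ring]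
    rw [exp_smul_involution H hH2, ← Complex.ofReal_cos, ← Complex.ofReal_sin]
    rw [Matrix.mul_add, Matrix.add_mul, Matrix.mul_smul, Matrix.mul_smul, Matrix.smul_mul,
      Matrix.smul_mul, Matrix.mul_one]
  have hG : ∀ α β : ℝ, twoCopyExpect P Q H ρ O α β =
        fb0 α * fb0 β * (tr4 ρ O A A A A)
        + fb0 α * fb2 β * (-(tr4 ρ O A A A B))
        + fb0 α * fb2 β * (tr4 ρ O A B A A)
        + fb0 α * fb1 β * (tr4 ρ O A B A B)
        + fb2 α * fb0 β * (-(tr4 ρ O A A B A))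
        + fb2 α * fb2 β * (tr4 ρ O A A B B)
        + fb2 α * fb2 β * (-(tr4 ρ O A B B A))
        + fb2 α * fb1 β * (-(tr4 ρ O A B B B))
        + fb2 α * fb0 β * (tr4 ρ O B A A A)
        + fb2 α * fb2 β * (-(tr4 ρ O B A A B))
        + fb2 α * fb2 β * (tr4 ρ O B B A A)
        + fb2 α * fb1 β * (tr4 ρ O B B A B)
        + fb1 α * fb0 β * (tr4 ρ O B A B A)
        + fb1 α * fb2 β * (-(tr4 ρ O B A B B))
        + fb1 α * fb2 β * (tr4 ρ O B B B A)
        + fb1 α * fb1 β * (tr4 ρ O B B B B) := by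
    intro α β
    rw [twoCopyExpect, hW α, hW β,
      key_expand A B ρ O _ _ _ _ (star_ofReal' _) (star_negIsin _) (star_ofReal' _)
        (star_negIsin _), sq_negIsin (Real.sin (α/2)), sq_negIsin (Real.sin (β/2))]
    simp only [fb0, fb1, fb2]
    ring
  have hfun : (fun t : ℝ => twoCopyExpect P Q H ρ O t t)
      = (fun t : ℝ => fb0 t * fb0 t * (tr4 ρ O A A A A)
        + fb0 t * fb2 t * (-(tr4 ρ O A A A B))
        + fb0 t * fb2 t * (tr4 ρ O A B A A)
        + fb0 t * fb1 t * (tr4 ρ O A B A B)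
        + fb2 t * fb0 t * (-(tr4 ρ O A A B A))
        + fb2 t * fb2 t * (tr4 ρ O A A B B)
        + fb2 t * fb2 t * (-(tr4 ρ O A B B A))
        + fb2 t * fb1 t * (-(tr4 ρ O A B B B))
        + fb2 t * fb0 t * (tr4 ρ O B A A A)
        + fb2 t * fb2 t * (-(tr4 ρ O B A A B))
        + fb2 t * fb2 t * (tr4 ρ O B B A A)
        + fb2 t * fb1 t * (tr4 ρ O B B A B)
        + fb1 t * fb0 t * (tr4 ρ O B A B A)
        + fb1 t * fb2 t * (-(tr4 ρ O B A B B))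
        + fb1 t * fb2 t * (tr4 ρ O B B B A)
        + fb1 t * fb1 t * (tr4 ρ O B B B B)) := funext fun t => hG t t
  rw [hfun]
  have key :=
    ((((((((((((((((((hfb0 θ).mul (hfb0 θ)).mul_const (tr4 ρ O A A A A)).add
      (((hfb0 θ).mul (hfb2 θ)).mul_const (-(tr4 ρ O A A A B)))).add
      (((hfb0 θ).mul (hfb2 θ)).mul_const (tr4 ρ O A B A A))).add
      (((hfb0 θ).mul (hfb1 θ)).mul_const (tr4 ρ O A B A B))).add
      (((hfb2 θ).mul (hfb0 θ)).mul_const (-(tr4 ρ O A A B A)))).add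
      (((hfb2 θ).mul (hfb2 θ)).mul_const (tr4 ρ O A A B B))).add
      (((hfb2 θ).mul (hfb2 θ)).mul_const (-(tr4 ρ O A B B A)))).add
      (((hfb2 θ).mul (hfb1 θ)).mul_const (-(tr4 ρ O A B B B)))).add
      (((hfb2 θ).mul (hfb0 θ)).mul_const (tr4 ρ O B A A A))).add
      (((hfb2 θ).mul (hfb2 θ)).mul_const (-(tr4 ρ O B A A B)))).add
      (((hfb2 θ).mul (hfb2 θ)).mul_const (tr4 ρ O B B A A))).add
      (((hfb2 θ).mul (hfb1 θ)).mul_const (tr4 ρ O B B A B))).add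
      (((hfb1 θ).mul (hfb0 θ)).mul_const (tr4 ρ O B A B A))).add
      (((hfb1 θ).mul (hfb2 θ)).mul_const (-(tr4 ρ O B A B B)))).add
      (((hfb1 θ).mul (hfb2 θ)).mul_const (tr4 ρ O B B B A))).add
      (((hfb1 θ).mul (hfb1 θ)).mul_const (tr4 ρ O B B B B)))
  refine key.congr_deriv ?_
  symm
  rw [hG (θ + Real.pi/2) θ, hG (θ - Real.pi/2) θ, hG θ (θ + Real.pi/2), hG θ (θ - Real.pi/2)]
  have sh0 := shift0 θ
  have sh1 := shift1 θ
  have sh2 := shift2 θ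
  linear_combination
      ((tr4 ρ O A A A A) * fb0 θ / 2) * sh0 + ((tr4 ρ O A A A A) * fb0 θ / 2) * sh0
      + -((tr4 ρ O A A A B) * fb2 θ / 2) * sh0 + -((tr4 ρ O A A A B) * fb0 θ / 2) * sh2
      + ((tr4 ρ O A B A A) * fb2 θ / 2) * sh0 + ((tr4 ρ O A B A A) * fb0 θ / 2) * sh2
      + ((tr4 ρ O A B A B) * fb1 θ / 2) * sh0 + ((tr4 ρ O A B A B) * fb0 θ / 2) * sh1
      + -((tr4 ρ O A A B A) * fb0 θ / 2) * sh2 + -((tr4 ρ O A A B A) * fb2 θ / 2) * sh0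
      + ((tr4 ρ O A A B B) * fb2 θ / 2) * sh2 + ((tr4 ρ O A A B B) * fb2 θ / 2) * sh2
      + -((tr4 ρ O A B B A) * fb2 θ / 2) * sh2 + -((tr4 ρ O A B B A) * fb2 θ / 2) * sh2
      + -((tr4 ρ O A B B B) * fb1 θ / 2) * sh2 + -((tr4 ρ O A B B B) * fb2 θ / 2) * sh1
      + ((tr4 ρ O B A A A) * fb0 θ / 2) * sh2 + ((tr4 ρ O B A A A) * fb2 θ / 2) * sh0
      + -((tr4 ρ O B A A B) * fb2 θ / 2) * sh2 + -((tr4 ρ O B A A B) * fb2 θ / 2) * sh2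
      + ((tr4 ρ O B B A A) * fb2 θ / 2) * sh2 + ((tr4 ρ O B B A A) * fb2 θ / 2) * sh2
      + ((tr4 ρ O B B A B) * fb1 θ / 2) * sh2 + ((tr4 ρ O B B A B) * fb2 θ / 2) * sh1
      + ((tr4 ρ O B A B A) * fb0 θ / 2) * sh1 + ((tr4 ρ O B A B A) * fb1 θ / 2) * sh0
      + -((tr4 ρ O B A B B) * fb2 θ / 2) * sh1 + -((tr4 ρ O B A B B) * fb1 θ / 2) * sh2
      + ((tr4 ρ O B B B A) * fb2 θ / 2) * sh1 + ((tr4 ρ O B B B A) * fb1 θ / 2) * sh2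
      + ((tr4 ρ O B B B B) * fb1 θ / 2) * sh1 + ((tr4 ρ O B B B B) * fb1 θ / 2) * sh1
end
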